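/- arXiv:1404.6320 — 2 statements merged into one kernel-verified Lean document; each statement's English description precedes it below -/
import Mathlib

section
/- The function C(x) = 2·log₂((1+√(1+4x))/2) − ((√(1+4x)−1)²/(4x))·log₂ e satisfies 0 < C(x) < log₂(1+x) for all x > 0. -/
theorem stmt_7 (x : ℝ) (hx : 0 < x) :
    0 < 2 * Real.logb 2 ((1 + Real.sqrt (1 + 4 * x)) / 2) -
        ((Real.sqrt (1 + 4 * x) - 1) ^ 2 / (4 * x)) * Real.logb 2 (Real.exp 1) ∧
    2 * Real.logb 2 ((1 + Real.sqrt (1 + 4 * x)) / 2) -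
        ((Real.sqrt (1 + 4 * x) - 1) ^ 2 / (4 * x)) * Real.logb 2 (Real.exp 1) <
      Real.logb 2 (1 + x) := by
  set s := Real.sqrt (1 + 4 * x) with hs
  have h1 : (1:ℝ) < 1 + 4 * x := by linarith
  have hs1 : 1 < s := by
    have := Real.sqrt_lt_sqrt (by norm_num : (0:ℝ) ≤ 1) h1
    simpa using this
  have hsq : s ^ 2 = 1 + 4 * x := Real.sq_sqrt (by linarith)
  have h4x : 4 * x = (s - 1) * (s + 1) := by nlinarith
  have hsm1 : (0:ℝ) < s - 1 := by linarith
  have hsp1 : (0:ℝ) < s + 1 := by linarith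
  have hfrac : (s - 1) ^ 2 / (4 * x) = (s - 1) / (s + 1) := by
    rw [sq, h4x, mul_div_mul_left _ _ (ne_of_gt hsm1)]
  have hl2 : (0:ℝ) < Real.log 2 := Real.log_pos one_lt_two
  have ha : (0:ℝ) < (1 + s) / 2 := by linarith
  -- key1 : (s-1)/(s+1) < log ((1+s)/2)
  have key1 : (s - 1) / (s + 1) < Real.log ((1 + s) / 2) := by
    have hz : (0:ℝ) < 2 / (1 + s) := by positivity
    have hne : 2 / (1 + s) ≠ 1 := by
      intro h
      have : (2:ℝ) = 1 + s := by field_simp at h; linarith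
      linarith
    have h := Real.log_lt_sub_one_of_pos hz hne
    have hinv : 2 / (1 + s) = ((1 + s) / 2)⁻¹ := by rw [inv_div]
    rw [hinv, Real.log_inv] at h
    have he : ((1 + s) / 2)⁻¹ - 1 = -((s - 1) / (s + 1)) := by
      rw [inv_div]
      field_simp
      ring
    rw [he] at h
    linarith
  -- key2 : log ((1+s)^2/(s^2+3)) < (s-1)/(s+1)
  have hden : (0:ℝ) < s ^ 2 + 3 := by positivity
  have key2 : Real.log ((1 + s) ^ 2 / (s ^ 2 + 3)) < (s - 1) / (s + 1) := by
    have hz : (0:ℝ) < (1 + s) ^ 2 / (s ^ 2 + 3) := by positivity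
    have hne : (1 + s) ^ 2 / (s ^ 2 + 3) ≠ 1 := by
      intro h
      rw [div_eq_one_iff_eq (ne_of_gt hden)] at h
      nlinarith
    have h := Real.log_lt_sub_one_of_pos hz hne
    have he : (1 + s) ^ 2 / (s ^ 2 + 3) - 1 = (2 * s - 2) / (s ^ 2 + 3) := by
      field_simp
      ring
    rw [he] at h
    have hle : (2 * s - 2) / (s ^ 2 + 3) ≤ (s - 1) / (s + 1) := by
      rw [div_le_div_iff₀ hden hsp1]
      nlinarith [sq_nonneg (s - 1), hsm1.le]
    linarith
  -- rewrite logs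
  have hx1 : 1 + x = (s ^ 2 + 3) / 4 := by nlinarith
  have hlogsq : 2 * Real.log ((1 + s) / 2) = Real.log ((1 + s) ^ 2 / 4) := by
    rw [show (1 + s) ^ 2 / 4 = ((1 + s) / 2) ^ 2 by ring, Real.log_pow]
    norm_num
  have hsplit : Real.log ((1 + s) ^ 2 / (s ^ 2 + 3)) =
      Real.log ((1 + s) ^ 2 / 4) - Real.log ((s ^ 2 + 3) / 4) := by
    rw [Real.log_div (by positivity) (ne_of_gt hden),
        Real.log_div (by positivity) (by norm_num),
        Real.log_div (ne_of_gt hden) (by norm_num)]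
    ring
  have hlower : 0 < 2 * Real.log ((1 + s) / 2) - (s - 1) / (s + 1) := by
    have hpos : 0 < (s - 1) / (s + 1) := div_pos hsm1 hsp1
    linarith
  have hupper : 2 * Real.log ((1 + s) / 2) - (s - 1) / (s + 1) <
      Real.log (1 + x) := by
    rw [hx1, hlogsq]
    linarith [key2, hsplit]
  rw [Real.logb, Real.logb, Real.logb, Real.log_exp, hfrac]
  constructor
  · have := div_pos hlower hl2
    calc (0:ℝ) < (2 * Real.log ((1 + s) / 2) - (s - 1) / (s + 1)) / Real.log 2 := this
      _ = 2 * (Real.log ((1 + s) / 2) / Real.log 2) -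
          (s - 1) / (s + 1) * (1 / Real.log 2) := by ring
  · calc 2 * (Real.log ((1 + s) / 2) / Real.log 2) -
          (s - 1) / (s + 1) * (1 / Real.log 2)
        = (2 * Real.log ((1 + s) / 2) - (s - 1) / (s + 1)) / Real.log 2 := by ring
      _ < Real.log (1 + x) / Real.log 2 := by gcongr
end

section
/- For fixed n > 0, Q > 0, L > 0, and fixed packet-throughput function TL(M) = √M/(2·L²·√(1+Q)), the function S(M) = n·M/((1+Q)·M²/TL(M) + n) of real M > 0 attains its maximum at M* = n^{2/3}/(L^{4/3}·(1+Q)), and S(M*) = n^{2/3}/(3·L^{4/3}·(1+Q)). -/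
theorem stmt_10 (n Q L : ℝ) (hn : 0 < n) (hQ : 0 < Q) (hL : 0 < L)
    (TL : ℝ → ℝ) (hTL : ∀ M : ℝ, 0 < M → TL M = Real.sqrt M / (2 * L ^ 2 * Real.sqrt (1 + Q)))
    (S : ℝ → ℝ) (hSdef : ∀ M : ℝ, 0 < M → S M = n * M / ((1 + Q) * M ^ 2 / TL M + n)) :
    (∀ M : ℝ, 0 < M → S M ≤ S (n ^ ((2 : ℝ) / 3) / (L ^ ((4 : ℝ) / 3) * (1 + Q)))) ∧
    S (n ^ ((2 : ℝ) / 3) / (L ^ ((4 : ℝ) / 3) * (1 + Q))) =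
      n ^ ((2 : ℝ) / 3) / (3 * L ^ ((4 : ℝ) / 3) * (1 + Q)) := by
  have hQ1 : (0:ℝ) < 1 + Q := by linarith
  have hsQ : 0 < Real.sqrt (1 + Q) := Real.sqrt_pos.mpr hQ1
  have hsQ2 : Real.sqrt (1 + Q) ^ 2 = 1 + Q := Real.sq_sqrt hQ1.le
  set c : ℝ := 2 * L ^ 2 * (1 + Q) * Real.sqrt (1 + Q) with hc
  have hcpos : 0 < c := by positivity
  set M0 : ℝ := n ^ ((2 : ℝ) / 3) / (L ^ ((4 : ℝ) / 3) * (1 + Q)) with hM0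
  have hM0pos : 0 < M0 := by
    have h1 : 0 < n ^ ((2 : ℝ) / 3) := Real.rpow_pos_of_pos hn _
    have h2 : 0 < L ^ ((4 : ℝ) / 3) := Real.rpow_pos_of_pos hL _
    exact div_pos h1 (by positivity)
  -- simplified formula for S
  have hS : ∀ M : ℝ, 0 < M → S M = n * M / (c * (M * Real.sqrt M) + n) := by
    intro M hM
    have hs : 0 < Real.sqrt M := Real.sqrt_pos.mpr hM
    have hMs : Real.sqrt M * Real.sqrt M = M := Real.mul_self_sqrt hM.le
    rw [hSdef M hM, hTL M hM]
    congr 2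
    rw [div_div_eq_mul_div, div_eq_iff hs.ne']
    linear_combination (-(2 * L ^ 2 * (1 + Q) * Real.sqrt (1 + Q) * M)) * hMs
  -- cube of M0
  have hn23 : (n ^ ((2:ℝ)/3)) ^ (3:ℕ) = n ^ 2 := by
    rw [← Real.rpow_natCast (n ^ ((2:ℝ)/3)) 3, ← Real.rpow_mul hn.le,
      ← Real.rpow_natCast n 2]
    norm_num
  have hL43 : (L ^ ((4:ℝ)/3)) ^ (3:ℕ) = L ^ 4 := by
    rw [← Real.rpow_natCast (L ^ ((4:ℝ)/3)) 3, ← Real.rpow_mul hL.le,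
      ← Real.rpow_natCast L 4]
    norm_num
  have hM03 : M0 ^ 3 = n ^ 2 / (L ^ 4 * (1 + Q) ^ 3) := by
    rw [hM0, div_pow, mul_pow, hn23, hL43]
  -- key identity : c * (M0 * sqrt M0) = 2 * n
  have hkeysq : (c * (M0 * Real.sqrt M0)) ^ 2 = (2 * n) ^ 2 := by
    have hsq : Real.sqrt M0 ^ 2 = M0 := Real.sq_sqrt hM0pos.le
    have e1 : (c * (M0 * Real.sqrt M0)) ^ 2 = c ^ 2 * M0 ^ 2 * Real.sqrt M0 ^ 2 := by
      ring
    rw [e1, hsq, hc]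
    have e2 : (2 * L ^ 2 * (1 + Q) * Real.sqrt (1 + Q)) ^ 2 = 4 * L ^ 4 * (1 + Q) ^ 3 := by
      linear_combination (4 * L ^ 4 * (1 + Q) ^ 2) * hsQ2
    rw [e2]
    rw [show 4 * L ^ 4 * (1 + Q) ^ 3 * M0 ^ 2 * M0 = 4 * L ^ 4 * (1 + Q) ^ 3 * M0 ^ 3 from by
      ring, hM03]
    field_simp
    ring
  have hkey : c * (M0 * Real.sqrt M0) = 2 * n := by
    have hA : 0 ≤ c * (M0 * Real.sqrt M0) := by positivity
    have : c * (M0 * Real.sqrt M0) = Real.sqrt ((2 * n) ^ 2) := by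
      rw [← hkeysq, Real.sqrt_sq hA]
    rw [this, Real.sqrt_sq (by positivity)]
  -- value at M0
  have hSM0 : S M0 = M0 / 3 := by
    rw [hS M0 hM0pos, hkey]
    field_simp
    ring
  constructor
  · intro M hM
    rw [hS M hM, hSM0]
    have hs : 0 < Real.sqrt M := Real.sqrt_pos.mpr hM
    have hs0 : 0 < Real.sqrt M0 := Real.sqrt_pos.mpr hM0pos
    have hMs : Real.sqrt M ^ 2 = M := Real.sq_sqrt hM.le
    have hM0s : Real.sqrt M0 ^ 2 = M0 := Real.sq_sqrt hM0pos.le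
    set a := Real.sqrt M
    set b := Real.sqrt M0
    have hden : 0 < c * (M * a) + n := by positivity
    rw [div_le_div_iff₀ hden (by norm_num : (0:ℝ) < 3)]
    -- n = c * b^3 / 2
    have hnval : n = c * (b ^ 2 * b) / 2 := by
      rw [← hM0s] at hkey; linarith
    rw [← hMs, ← hM0s, hnval]
    nlinarith [mul_nonneg (mul_nonneg (sq_nonneg (a - b)) (by positivity : (0:ℝ) ≤ 2 * a + b))
      (by positivity : (0:ℝ) ≤ c ^ 2 * b ^ 5), sq_nonneg (a - b), hs.le, hs0.le, hcpos.le]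
  · rw [hSM0, hM0]
    rw [div_div]
    congr 1
    ring
end
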